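/- arXiv:1602.06621 — 4 statements merged into one kernel-verified Lean document; each statement's English description precedes it below -/
import Mathlib

section
/- An upper triangular matrix A ∈ R^{n×n} with unit diagonal and n ≥ 2 that is not itself diagonal cannot be equilibrated by positive diagonal scalings D, E (i.e., DAE cannot have all row ℓ2-norms equal to some α and all column ℓ2-norms equal to some β). -/
/-- An upper triangular matrix with unit diagonal which is not diagonal (`n ≥ 2`) cannot
be equilibrated by positive diagonal scalings. -/
theorem unit_triangular_not_equilibratable {n : ℕ} (hn : 2 ≤ n)
    (A : Matrix (Fin n) (Fin n) ℝ)
    (htri : ∀ i j : Fin n, j < i → A i j = 0)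
    (hdiag : ∀ i : Fin n, A i i = 1)
    (hnotdiag : ∃ i j : Fin n, i < j ∧ A i j ≠ 0) :
    ¬ ∃ (d : Fin n → ℝ) (e : Fin n → ℝ) (α β : ℝ),
        (∀ i, 0 < d i) ∧ (∀ j, 0 < e j) ∧ 0 < α ∧ 0 < β ∧
        (∀ i, ∑ j, (d i * A i j * e j) ^ 2 = α ^ 2) ∧
        (∀ j, ∑ i, (d i * A i j * e j) ^ 2 = β ^ 2) := by
  rintro ⟨d, e, α, β, hd, he, hα, hβ, hrow, hcol⟩
  -- α² = β²
  have hab : α ^ 2 = β ^ 2 := by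
    have h1 : ∑ i : Fin n, ∑ j : Fin n, (d i * A i j * e j) ^ 2 = (n : ℝ) * α ^ 2 := by
      simp [hrow, Finset.sum_const, nsmul_eq_mul]
    have h2 : ∑ i : Fin n, ∑ j : Fin n, (d i * A i j * e j) ^ 2 = (n : ℝ) * β ^ 2 := by
      rw [Finset.sum_comm]
      simp [hcol, Finset.sum_const, nsmul_eq_mul]
    have hn0 : (n : ℝ) ≠ 0 := by positivity
    exact mul_left_cancel₀ hn0 (h1.symm.trans h2)
  -- main induction: all strictly upper entries vanish
  have key : ∀ m : ℕ, ∀ i : Fin n, (i : ℕ) = m → ∀ j : Fin n, i < j → A i j = 0 := by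
    intro m
    induction m using Nat.strong_induction_on with
    | _ m ih =>
      intro i him j hij
      -- column i sum reduces to its diagonal term
      have hcoli : ∑ k : Fin n, (d k * A k i * e i) ^ 2 = (d i * A i i * e i) ^ 2 := by
        apply Finset.sum_eq_single_of_mem i (Finset.mem_univ i)
        intro k _ hk
        rcases lt_or_gt_of_ne hk with h | h
        · have hz : A k i = 0 := ih (k : ℕ) (him ▸ h) k rfl i h
          simp [hz]
        · have hz : A k i = 0 := htri k i h
          simp [hz]
      have hb : (d i * e i) ^ 2 = α ^ 2 := by
        have := hcol i
        rw [hcoli, hdiag] at this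
        rw [hab]
        simpa using this
      -- row i: remaining terms sum to zero
      have hrowi := hrow i
      have hsplit : (d i * A i i * e i) ^ 2 +
          ∑ k ∈ Finset.univ.erase i, (d i * A i k * e k) ^ 2 = α ^ 2 := by
        rw [Finset.add_sum_erase Finset.univ (fun k => (d i * A i k * e k) ^ 2)
          (Finset.mem_univ i)]
        exact hrowi
      have hzero : ∑ k ∈ Finset.univ.erase i, (d i * A i k * e k) ^ 2 = 0 := by
        rw [hdiag] at hsplit
        have : (d i * e i) ^ 2 +
            ∑ k ∈ Finset.univ.erase i, (d i * A i k * e k) ^ 2 = α ^ 2 := by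
          simpa using hsplit
        linarith [hb]
      have hterm : (d i * A i j * e j) ^ 2 = 0 := by
        have hjmem : j ∈ Finset.univ.erase i :=
          Finset.mem_erase.mpr ⟨(ne_of_gt hij), Finset.mem_univ j⟩
        have hnn : ∀ k ∈ Finset.univ.erase i, 0 ≤ (d i * A i k * e k) ^ 2 := by
          intro k _; positivity
        exact (Finset.sum_eq_zero_iff_of_nonneg hnn).mp hzero j hjmem
      have : d i * A i j * e j = 0 := by
        exact pow_eq_zero_iff (n := 2) (by norm_num) |>.mp hterm
      have hd0 := (hd i).ne'
      have he0 := (he j).ne'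
      rcases mul_eq_zero.mp this with h | h
      · rcases mul_eq_zero.mp h with h' | h'
        · exact absurd h' hd0
        · exact h'
      · exact absurd h he0
  obtain ⟨i, j, hij, hne⟩ := hnotdiag
  exact hne (key (i : ℕ) i rfl j hij)
end

section
/- Let A ∈ R^{n×n} be invertible. Diagonal matrices D, E with positive diagonal entries satisfy: DAE is equilibrated with all row and column ℓ2-norms equal to one, if and only if (D,E) minimizes Φ(DAE) = exp(‖DAE‖_F²/2)/|det(DAE)| over all diagonal D, E with positive diagonals. -/
open Matrix

private lemma aux_log_forces (r : ℝ) (h : ∀ u : ℝ, 0 < u → Real.log u ≤ (u - 1) * r) :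
    r = 1 := by
  have hr0 : 0 < r := by
    have h2 := h 2 (by norm_num)
    have hl2 := Real.log_pos (by norm_num : (1:ℝ) < 2)
    nlinarith
  have hu : 0 < 2 / (r + 1) := by positivity
  have h1 := h (2 / (r + 1)) hu
  have h2 : 1 - 1 / (2 / (r + 1)) ≤ Real.log (2 / (r + 1)) := by
    have hinv := Real.log_le_sub_one_of_pos (show (0:ℝ) < 1 / (2 / (r + 1)) by positivity)
    rw [Real.log_div one_ne_zero (ne_of_gt hu), Real.log_one] at hinv
    linarith
  have h3 : 1 - 1 / (2 / (r + 1)) ≤ (2 / (r + 1) - 1) * r := le_trans h2 h1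
  have hr1 : 0 < r + 1 := by linarith
  have h4 : (r - 1) ^ 2 ≤ 0 := by
    have e1 : 1 / (2 / (r + 1)) = (r + 1) / 2 := by field_simp
    rw [e1] at h3
    have h5 := mul_le_mul_of_nonneg_right h3 hr1.le
    have e2 : (2 / (r + 1) - 1) * r * (r + 1) = (2 - (r + 1)) * r := by
      field_simp
    rw [e2] at h5
    nlinarith
  have := le_antisymm h4 (sq_nonneg _)
  have : r - 1 = 0 := by
    have := sq_eq_zero_iff.mp this
    exact this
  linarith

private lemma aux_scale_forces (r : ℝ)
    (h : ∀ s : ℝ, 0 < s → Real.log s ≤ (s ^ 2 - 1) * r / 2) : r = 1 := by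
  apply aux_log_forces
  intro u hu
  have hs := h (Real.sqrt u) (Real.sqrt_pos.2 hu)
  rw [Real.log_sqrt hu.le, Real.sq_sqrt hu.le] at hs
  linarith

private lemma aux_phi_ineq (S r s P : ℝ) (hP : 0 < P) (hs : 0 < s)
    (h : Real.exp (S / 2) / P ≤ Real.exp ((S + (s ^ 2 - 1) * r) / 2) / (s * P)) :
    Real.log s ≤ (s ^ 2 - 1) * r / 2 := by
  rw [div_le_div_iff₀ hP (by positivity)] at h
  have hx : Real.exp ((S + (s ^ 2 - 1) * r) / 2) =
      Real.exp (S / 2) * Real.exp ((s ^ 2 - 1) * r / 2) := by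
    rw [← Real.exp_add]; ring_nf
  rw [hx] at h
  have hE : 0 < Real.exp (S / 2) := Real.exp_pos _
  have h3 : s * (Real.exp (S / 2) * P) ≤ Real.exp ((s ^ 2 - 1) * r / 2) *
      (Real.exp (S / 2) * P) := by nlinarith
  have h4 : s ≤ Real.exp ((s ^ 2 - 1) * r / 2) :=
    le_of_mul_le_mul_right h3 (by positivity)
  exact (Real.log_le_iff_le_exp hs).2 h4

private lemma aux_det {n : ℕ} (A : Matrix (Fin n) (Fin n) ℝ) (d e : Fin n → ℝ) :
    (Matrix.of fun i j => d i * A i j * e j).det = (∏ i, d i) * ((∏ j, e j) * A.det) := by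
  have hmat : (Matrix.of fun i j => d i * A i j * e j) =
      Matrix.diagonal d * A * Matrix.diagonal e := by
    ext i j
    simp [Matrix.mul_diagonal, Matrix.diagonal_mul]
  rw [hmat, Matrix.det_mul, Matrix.det_mul, Matrix.det_diagonal, Matrix.det_diagonal]
  ring

private lemma aux_abs_det {n : ℕ} (A : Matrix (Fin n) (Fin n) ℝ) (d e : Fin n → ℝ)
    (hd : ∀ i, 0 < d i) (he : ∀ j, 0 < e j) :
    |(Matrix.of fun i j => d i * A i j * e j).det| =
      (∏ i, d i) * ((∏ j, e j) * |A.det|) := by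
  rw [aux_det, abs_mul, abs_mul, abs_of_pos (Finset.prod_pos fun i _ => hd i),
    abs_of_pos (Finset.prod_pos fun j _ => he j)]

/-- For invertible `A`, positive diagonal scalings `D = diag d`, `E = diag e` equilibrate
`A` with all row and column ℓ2-norms equal to one iff `(D, E)` minimizes
`Φ(DAE) = exp(‖DAE‖_F²/2)/|det(DAE)|` over all positive diagonal scalings. -/
theorem equilibration_iff_minimizes_Phi {n : ℕ} (A : Matrix (Fin n) (Fin n) ℝ)
    (hA : IsUnit A.det) (d e : Fin n → ℝ) (hd : ∀ i, 0 < d i) (he : ∀ j, 0 < e j) :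
    (((∀ i, ∑ j, (d i * A i j * e j) ^ 2 = 1) ∧
      (∀ j, ∑ i, (d i * A i j * e j) ^ 2 = 1)) ↔
     (∀ d' e' : Fin n → ℝ, (∀ i, 0 < d' i) → (∀ j, 0 < e' j) →
        Real.exp ((∑ i, ∑ j, (d i * A i j * e j) ^ 2) / 2) /
            |Matrix.det (Matrix.of fun i j => d i * A i j * e j)| ≤
        Real.exp ((∑ i, ∑ j, (d' i * A i j * e' j) ^ 2) / 2) /
            |Matrix.det (Matrix.of fun i j => d' i * A i j * e' j)|)) := by
  have hK : 0 < |A.det| := abs_pos.2 (IsUnit.ne_zero hA)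
  have hPd : 0 < ∏ i, d i := Finset.prod_pos fun i _ => hd i
  have hPe : 0 < ∏ j, e j := Finset.prod_pos fun j _ => he j
  constructor
  · rintro ⟨hrow, hcol⟩ d' e' hd' he'
    set s : Fin n → ℝ := fun i => d' i / d i with hs_def
    set t : Fin n → ℝ := fun j => e' j / e j with ht_def
    have hs : ∀ i, 0 < s i := fun i => div_pos (hd' i) (hd i)
    have ht : ∀ j, 0 < t j := fun j => div_pos (he' j) (he j)
    have hdi : ∀ i, d' i = s i * d i := fun i =>
      (div_mul_cancel₀ (d' i) (hd i).ne').symm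
    have hej : ∀ j, e' j = t j * e j := fun j =>
      (div_mul_cancel₀ (e' j) (he j).ne').symm
    have hB : ∀ i j, (d' i * A i j * e' j) ^ 2 =
        (s i * t j) ^ 2 * (d i * A i j * e j) ^ 2 := by
      intro i j
      rw [hdi i, hej j]; ring
    -- key log inequality
    have hlogsum : (∑ i, Real.log (s i ^ 2)) + (∑ j, Real.log (t j ^ 2)) ≤
        (∑ i, ∑ j, (d' i * A i j * e' j) ^ 2) - ∑ i, ∑ j, (d i * A i j * e j) ^ 2 := by
      have step1 : ∀ i j, Real.log ((s i * t j) ^ 2) * (d i * A i j * e j) ^ 2 ≤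
          ((s i * t j) ^ 2 - 1) * (d i * A i j * e j) ^ 2 :=
        fun i j => mul_le_mul_of_nonneg_right
          (Real.log_le_sub_one_of_pos (pow_pos (mul_pos (hs i) (ht j)) 2)) (sq_nonneg _)
      have step2 : (∑ i, ∑ j, Real.log ((s i * t j) ^ 2) * (d i * A i j * e j) ^ 2) ≤
          ∑ i, ∑ j, ((s i * t j) ^ 2 - 1) * (d i * A i j * e j) ^ 2 :=
        Finset.sum_le_sum fun i _ => Finset.sum_le_sum fun j _ => step1 i j
      have step3 : (∑ i, ∑ j, Real.log ((s i * t j) ^ 2) * (d i * A i j * e j) ^ 2) =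
          (∑ i, Real.log (s i ^ 2)) + ∑ j, Real.log (t j ^ 2) := by
        have e1 : ∀ i j, Real.log ((s i * t j) ^ 2) * (d i * A i j * e j) ^ 2 =
            Real.log (s i ^ 2) * (d i * A i j * e j) ^ 2 +
            Real.log (t j ^ 2) * (d i * A i j * e j) ^ 2 := by
          intro i j
          rw [mul_pow, Real.log_mul (pow_pos (hs i) 2).ne' (pow_pos (ht j) 2).ne']
          ring
        calc (∑ i, ∑ j, Real.log ((s i * t j) ^ 2) * (d i * A i j * e j) ^ 2)
            = (∑ i, ∑ j, Real.log (s i ^ 2) * (d i * A i j * e j) ^ 2) +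
              ∑ i, ∑ j, Real.log (t j ^ 2) * (d i * A i j * e j) ^ 2 := by
              rw [← Finset.sum_add_distrib]
              refine Finset.sum_congr rfl fun i _ => ?_
              rw [← Finset.sum_add_distrib]
              exact Finset.sum_congr rfl fun j _ => e1 i j
          _ = (∑ i, Real.log (s i ^ 2)) + ∑ j, Real.log (t j ^ 2) := by
              congr 1
              · refine Finset.sum_congr rfl fun i _ => ?_
                rw [← Finset.mul_sum, hrow i, mul_one]
              · rw [Finset.sum_comm]
                refine Finset.sum_congr rfl fun j _ => ?_
                rw [← Finset.mul_sum, hcol j, mul_one]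
      have step4 : (∑ i, ∑ j, ((s i * t j) ^ 2 - 1) * (d i * A i j * e j) ^ 2) =
          (∑ i, ∑ j, (d' i * A i j * e' j) ^ 2) -
            ∑ i, ∑ j, (d i * A i j * e j) ^ 2 := by
        rw [← Finset.sum_sub_distrib]
        refine Finset.sum_congr rfl fun i _ => ?_
        rw [← Finset.sum_sub_distrib]
        refine Finset.sum_congr rfl fun j _ => ?_
        rw [hB i j]; ring
      rw [step3] at step2
      rw [step4] at step2
      exact step2
    have hexp : Real.exp ((∑ i, ∑ j, (d i * A i j * e j) ^ 2) / 2) *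
        ((∏ i, s i) * ∏ j, t j) ≤
        Real.exp ((∑ i, ∑ j, (d' i * A i j * e' j) ^ 2) / 2) := by
      have hls : (∑ i, Real.log (s i ^ 2)) = 2 * ∑ i, Real.log (s i) := by
        rw [Finset.mul_sum]
        exact Finset.sum_congr rfl fun i _ => by
          simp [Real.log_pow]
      have hlt : (∑ j, Real.log (t j ^ 2)) = 2 * ∑ j, Real.log (t j) := by
        rw [Finset.mul_sum]
        exact Finset.sum_congr rfl fun j _ => by
          simp [Real.log_pow]
      have hps : Real.exp (∑ i, Real.log (s i)) = ∏ i, s i := by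
        rw [Real.exp_sum]
        exact Finset.prod_congr rfl fun i _ => Real.exp_log (hs i)
      have hpt : Real.exp (∑ j, Real.log (t j)) = ∏ j, t j := by
        rw [Real.exp_sum]
        exact Finset.prod_congr rfl fun j _ => Real.exp_log (ht j)
      calc Real.exp ((∑ i, ∑ j, (d i * A i j * e j) ^ 2) / 2) *
            ((∏ i, s i) * ∏ j, t j)
          = Real.exp ((∑ i, ∑ j, (d i * A i j * e j) ^ 2) / 2 +
              ((∑ i, Real.log (s i)) + ∑ j, Real.log (t j))) := by
            rw [Real.exp_add, Real.exp_add, hps, hpt]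
        _ ≤ Real.exp ((∑ i, ∑ j, (d' i * A i j * e' j) ^ 2) / 2) := by
            apply Real.exp_le_exp.2
            rw [hls, hlt] at hlogsum
            linarith
    have hPs : 0 < ∏ i, s i := Finset.prod_pos fun i _ => hs i
    have hPt : 0 < ∏ j, t j := Finset.prod_pos fun j _ => ht j
    have hPd' : ∏ i, d' i = (∏ i, s i) * ∏ i, d i := by
      rw [← Finset.prod_mul_distrib]
      exact Finset.prod_congr rfl fun i _ => hdi i
    have hPe' : ∏ j, e' j = (∏ j, t j) * ∏ j, e j := by
      rw [← Finset.prod_mul_distrib]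
      exact Finset.prod_congr rfl fun j _ => hej j
    rw [aux_abs_det A d e hd he, aux_abs_det A d' e' hd' he', hPd', hPe']
    rw [div_le_div_iff₀ (by positivity) (by positivity)]
    nlinarith [mul_le_mul_of_nonneg_right hexp
        (le_of_lt (mul_pos hPd (mul_pos hPe hK))),
      Real.exp_pos ((∑ i, ∑ j, (d' i * A i j * e' j) ^ 2) / 2)]
  · intro hmin
    have hP : 0 < (∏ i, d i) * ((∏ j, e j) * |A.det|) :=
      mul_pos hPd (mul_pos hPe hK)
    constructor
    · intro i
      apply aux_scale_forces
      intro c hc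
      set d' : Fin n → ℝ := Function.update d i (c * d i) with hd'def
      have hd'pos : ∀ k, 0 < d' k := by
        intro k
        by_cases hk : k = i
        · subst hk; rw [hd'def, Function.update_self]; exact mul_pos hc (hd _)
        · rw [hd'def, Function.update_of_ne hk]; exact hd k
      have hsum : (∑ k, ∑ j, (d' k * A k j * e j) ^ 2) =
          (∑ k, ∑ j, (d k * A k j * e j) ^ 2) +
            (c ^ 2 - 1) * ∑ j, (d i * A i j * e j) ^ 2 := by
        have hpt : ∀ k, (∑ j, (d' k * A k j * e j) ^ 2) =
            (∑ j, (d k * A k j * e j) ^ 2) +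
              (if k = i then (c ^ 2 - 1) * ∑ j, (d i * A i j * e j) ^ 2 else 0) := by
          intro k
          by_cases hk : k = i
          · subst hk
            rw [if_pos rfl, hd'def, Function.update_self]
            have he1 : ∀ j, (c * d k * A k j * e j) ^ 2 =
                c ^ 2 * (d k * A k j * e j) ^ 2 := fun j => by ring
            rw [Finset.sum_congr rfl fun j _ => he1 j, ← Finset.mul_sum]
            ring
          · rw [if_neg hk, hd'def, Function.update_of_ne hk, add_zero]
        rw [Finset.sum_congr rfl fun k _ => hpt k, Finset.sum_add_distrib,
          Finset.sum_ite_eq' Finset.univ i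
            (fun _ => (c ^ 2 - 1) * ∑ j, (d i * A i j * e j) ^ 2),
          if_pos (Finset.mem_univ i)]
      have hprod : (∏ k, d' k) = c * ∏ k, d k := by
        rw [hd'def, Finset.prod_update_of_mem (Finset.mem_univ i)]
        rw [Finset.sdiff_singleton_eq_erase, mul_assoc,
          Finset.mul_prod_erase Finset.univ d (Finset.mem_univ i)]
      have hm := hmin d' e hd'pos he
      rw [aux_abs_det A d e hd he, aux_abs_det A d' e hd'pos he, hsum, hprod,
        show (c * ∏ k, d k) * ((∏ j, e j) * |A.det|) =
          c * ((∏ k, d k) * ((∏ j, e j) * |A.det|)) from by ring] at hm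
      exact aux_phi_ineq _ _ c _ hP hc hm
    · intro j
      apply aux_scale_forces
      intro c hc
      set e' : Fin n → ℝ := Function.update e j (c * e j) with he'def
      have he'pos : ∀ l, 0 < e' l := by
        intro l
        by_cases hl : l = j
        · subst hl; rw [he'def, Function.update_self]; exact mul_pos hc (he _)
        · rw [he'def, Function.update_of_ne hl]; exact he l
      have hsum : (∑ i, ∑ l, (d i * A i l * e' l) ^ 2) =
          (∑ i, ∑ l, (d i * A i l * e l) ^ 2) +
            (c ^ 2 - 1) * ∑ i, (d i * A i j * e j) ^ 2 := by
        have hpt : ∀ i, (∑ l, (d i * A i l * e' l) ^ 2) =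
            (∑ l, (d i * A i l * e l) ^ 2) +
              (c ^ 2 - 1) * (d i * A i j * e j) ^ 2 := by
          intro i
          have hterm : ∀ l, (d i * A i l * e' l) ^ 2 =
              (d i * A i l * e l) ^ 2 +
                (if l = j then (c ^ 2 - 1) * (d i * A i j * e j) ^ 2 else 0) := by
            intro l
            by_cases hl : l = j
            · subst hl
              rw [if_pos rfl, he'def, Function.update_self]
              ring
            · rw [if_neg hl, he'def, Function.update_of_ne hl, add_zero]
          rw [Finset.sum_congr rfl fun l _ => hterm l, Finset.sum_add_distrib,
            Finset.sum_ite_eq' Finset.univ j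
              (fun _ => (c ^ 2 - 1) * (d i * A i j * e j) ^ 2),
            if_pos (Finset.mem_univ j)]
        rw [Finset.sum_congr rfl fun i _ => hpt i, Finset.sum_add_distrib,
          ← Finset.mul_sum]
      have hprod : (∏ l, e' l) = c * ∏ l, e l := by
        rw [he'def, Finset.prod_update_of_mem (Finset.mem_univ j)]
        rw [Finset.sdiff_singleton_eq_erase, mul_assoc,
          Finset.mul_prod_erase Finset.univ e (Finset.mem_univ j)]
      have hm := hmin d e' hd he'pos
      rw [aux_abs_det A d e hd he, aux_abs_det A d e' hd he'pos, hsum, hprod,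
        show (∏ i, d i) * ((c * ∏ l, e l) * |A.det|) =
          c * ((∏ i, d i) * ((∏ j, e j) * |A.det|)) from by ring] at hm
      exact aux_phi_ineq _ _ c _ hP hc hm
end

section
/- Let U ∈ R^{n×n} be nonsingular with singular values σ₁ ≥ … ≥ σ_n > 0 and condition number κ = σ₁/σ_n. Then Φ(U) = exp(Σᵢ σᵢ²/2)/∏ᵢ σᵢ ≥ (e^{n/2}/2)(κ + 1/κ), and in particular 2e^{-n/2}Φ(U) ≥ κ. -/
open Matrix

/-! Written in the singular values, `Φ(U) = e^{n/2} ∏ᵢ ψ(σᵢ)` with `ψ(x) = e^{(x²-1)/2} / x`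
(`phiFactor`). By `e^t ≥ 1 + t` every factor `ψ(σᵢ)` is at least `1`, and
`ψ(a) ψ(b) = e^{(a²+b²)/2 - 1} / (ab) ≥ (a² + b²) / (2ab) = (a/b + b/a) / 2`.
Discarding all factors except those of `σ₁` and `σₙ` gives `Φ(U) ≥ e^{n/2} (κ + 1/κ) / 2`,
and `κ ≤ κ + 1/κ` gives the second bound. -/

theorem Matrix.sum_sum_sq_eq_trace_transpose_mul {m n R : Type*} [Fintype m] [Fintype n]
    [CommSemiring R] (A : Matrix m n R) : ∑ i, ∑ j, A i j ^ 2 = (Aᵀ * A).trace := by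
  simp only [trace, diag, mul_apply, transpose_apply, sq]
  exact Finset.sum_comm

section SVD

variable {m : Type*} [Fintype m] [DecidableEq m] {P Q : Matrix m m ℝ} (σ : m → ℝ)

theorem Matrix.transpose_mul_self_of_eq_mul_diagonal_mul (hP : P ∈ orthogonalGroup m ℝ) :
    (P * diagonal σ * Q)ᵀ * (P * diagonal σ * Q) = Qᵀ * diagonal (σ ^ 2) * Q := by
  have hPP : Pᵀ * P = 1 := (mem_orthogonalGroup_iff' m ℝ).mp hP
  calc (P * diagonal σ * Q)ᵀ * (P * diagonal σ * Q)
      = Qᵀ * diagonal σ * (Pᵀ * P) * diagonal σ * Q := by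
        simp only [transpose_mul, diagonal_transpose, Matrix.mul_assoc]
    _ = Qᵀ * diagonal (σ ^ 2) * Q := by
        rw [hPP, Matrix.mul_one, Matrix.mul_assoc Qᵀ, diagonal_mul_diagonal, sq]; rfl

variable (hP : P ∈ orthogonalGroup m ℝ) (hQ : Q ∈ orthogonalGroup m ℝ)
include hP hQ

theorem Matrix.sum_sum_sq_of_eq_mul_diagonal_mul :
    ∑ i, ∑ j, (P * diagonal σ * Q) i j ^ 2 = ∑ i, σ i ^ 2 := by
  rw [sum_sum_sq_eq_trace_transpose_mul, transpose_mul_self_of_eq_mul_diagonal_mul σ hP,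
    trace_mul_cycle, (mem_orthogonalGroup_iff m ℝ).mp hQ, Matrix.one_mul, trace_diagonal]
  rfl

theorem Matrix.det_transpose_mul_self_of_eq_mul_diagonal_mul :
    ((P * diagonal σ * Q)ᵀ * (P * diagonal σ * Q)).det = (∏ i, σ i) ^ 2 := by
  rw [transpose_mul_self_of_eq_mul_diagonal_mul σ hP, det_mul, det_mul, mul_comm,
    ← mul_assoc, ← det_mul, (mem_orthogonalGroup_iff m ℝ).mp hQ, det_one, one_mul,
    det_diagonal, ← Finset.prod_pow]
  rfl

end SVD

noncomputable def phiFactor (x : ℝ) : ℝ := Real.exp ((x ^ 2 - 1) / 2) / x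

theorem one_le_phiFactor {x : ℝ} (hx : 0 < x) : 1 ≤ phiFactor x := by
  rw [phiFactor, le_div_iff₀ hx, one_mul]
  nlinarith [Real.add_one_le_exp ((x ^ 2 - 1) / 2), sq_nonneg (x - 1)]

theorem add_div_two_le_phiFactor_mul {a b : ℝ} (ha : 0 < a) (hb : 0 < b) :
    (a / b + b / a) / 2 ≤ phiFactor a * phiFactor b := by
  rw [phiFactor, phiFactor, div_mul_div_comm, ← Real.exp_add, le_div_iff₀ (mul_pos ha hb)]
  calc (a / b + b / a) / 2 * (a * b) = (a ^ 2 - 1) / 2 + (b ^ 2 - 1) / 2 + 1 := by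
        field_simp; ring
    _ ≤ Real.exp ((a ^ 2 - 1) / 2 + (b ^ 2 - 1) / 2) := Real.add_one_le_exp _

theorem add_div_two_le_prod_phiFactor {ι : Type*} [Fintype ι] [DecidableEq ι] {σ : ι → ℝ}
    (hσ : ∀ k, 0 < σ k) (i j : ι) :
    (σ i / σ j + σ j / σ i) / 2 ≤ ∏ k, phiFactor (σ k) := by
  have hone (k : ι) : 1 ≤ phiFactor (σ k) := one_le_phiFactor (hσ k)
  refine le_trans ?_ (Finset.prod_le_prod_of_subset_of_one_le (Finset.subset_univ {i, j})
    (fun k _ => zero_le_one.trans (hone k)) fun k _ _ => hone k)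
  rcases eq_or_ne i j with rfl | hij
  · rw [div_self (hσ i).ne', Finset.pair_eq_singleton, Finset.prod_singleton]
    linarith [hone i]
  · rw [Finset.prod_pair hij]
    exact add_div_two_le_phiFactor_mul (hσ i) (hσ j)

theorem exp_sum_sq_div_prod_eq_mul_prod_phiFactor {ι : Type*} [Fintype ι] (σ : ι → ℝ) :
    Real.exp ((∑ i, σ i ^ 2) / 2) / ∏ i, σ i
      = Real.exp (Fintype.card ι / 2) * ∏ i, phiFactor (σ i) := by
  simp only [phiFactor, Finset.prod_div_distrib, ← Real.exp_sum, mul_div_assoc',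
    ← Real.exp_add]
  congr 2
  rw [← Finset.sum_div, Finset.sum_sub_distrib]
  simp only [Finset.sum_const, Finset.card_univ, nsmul_eq_mul, mul_one]
  ring

theorem Phi_ge_condition_number_general {n : ℕ} (hn : 0 < n) (U : Matrix (Fin n) (Fin n) ℝ)
    (σ : Fin n → ℝ) (hσpos : ∀ i, 0 < σ i)
    (P Q : Matrix (Fin n) (Fin n) ℝ)
    (hP : P ∈ Matrix.orthogonalGroup (Fin n) ℝ)
    (hQ : Q ∈ Matrix.orthogonalGroup (Fin n) ℝ)
    (hsvd : U = P * Matrix.diagonal σ * Q)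
    (κ : ℝ) (hκ : κ = σ ⟨0, hn⟩ / σ ⟨n - 1, Nat.sub_lt hn one_pos⟩) :
    (Real.exp ((n : ℝ) / 2) / 2) * (κ + 1 / κ) ≤
        Real.exp ((∑ i, ∑ j, (U i j) ^ 2) / 2) / Real.sqrt ((Uᵀ * U).det) ∧
    κ ≤ 2 * Real.exp (-(n : ℝ) / 2) *
        (Real.exp ((∑ i, ∑ j, (U i j) ^ 2) / 2) / Real.sqrt ((Uᵀ * U).det)) := by
  have hPhi : Real.exp ((∑ i, ∑ j, (U i j) ^ 2) / 2) / Real.sqrt ((Uᵀ * U).det)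
      = Real.exp ((n : ℝ) / 2) * ∏ i, phiFactor (σ i) := by
    rw [hsvd, sum_sum_sq_of_eq_mul_diagonal_mul σ hP hQ,
      det_transpose_mul_self_of_eq_mul_diagonal_mul σ hP hQ,
      Real.sqrt_sq (Finset.prod_nonneg fun i _ => (hσpos i).le),
      exp_sum_sq_div_prod_eq_mul_prod_phiFactor, Fintype.card_fin]
  have hκ_pos : 0 < κ := hκ ▸ div_pos (hσpos _) (hσpos _)
  have hbound : (κ + 1 / κ) / 2 ≤ ∏ i, phiFactor (σ i) := by
    rw [hκ, one_div_div]
    exact add_div_two_le_prod_phiFactor hσpos _ _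
  have hlower : (Real.exp ((n : ℝ) / 2) / 2) * (κ + 1 / κ) ≤
      Real.exp ((n : ℝ) / 2) * ∏ i, phiFactor (σ i) := by
    calc (Real.exp ((n : ℝ) / 2) / 2) * (κ + 1 / κ)
        = Real.exp ((n : ℝ) / 2) * ((κ + 1 / κ) / 2) := by ring
      _ ≤ _ := by gcongr
  rw [hPhi]
  refine ⟨hlower, ?_⟩
  calc κ ≤ κ + 1 / κ := le_add_of_nonneg_right (by positivity)
    _ = 2 * Real.exp (-(n : ℝ) / 2) * ((Real.exp ((n : ℝ) / 2) / 2) * (κ + 1 / κ)) := by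
      rw [neg_div, Real.exp_neg]
      field_simp
    _ ≤ _ := by gcongr

/-- Theorem 2 (lower bound): if `U` is nonsingular with singular values
`σ₁ ≥ … ≥ σ_n > 0` and condition number `κ = σ₁/σ_n`, then
`Φ(U) ≥ (e^{n/2}/2)(κ + 1/κ)`, and in particular `2e^{-n/2}Φ(U) ≥ κ`. -/
theorem Phi_ge_condition_number {n : ℕ} (hn : 0 < n) (U : Matrix (Fin n) (Fin n) ℝ)
    (hU : IsUnit U.det) (σ : Fin n → ℝ) (hσpos : ∀ i, 0 < σ i)
    (hsorted : ∀ i j : Fin n, i ≤ j → σ j ≤ σ i)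
    (P Q : Matrix (Fin n) (Fin n) ℝ)
    (hP : P ∈ Matrix.orthogonalGroup (Fin n) ℝ)
    (hQ : Q ∈ Matrix.orthogonalGroup (Fin n) ℝ)
    (hsvd : U = P * Matrix.diagonal σ * Q)
    (κ : ℝ) (hκ : κ = σ ⟨0, hn⟩ / σ ⟨n - 1, Nat.sub_lt hn one_pos⟩) :
    (Real.exp ((n : ℝ) / 2) / 2) * (κ + 1 / κ) ≤
        Real.exp ((∑ i, ∑ j, (U i j) ^ 2) / 2) / Real.sqrt ((Uᵀ * U).det) ∧
    κ ≤ 2 * Real.exp (-(n : ℝ) / 2) *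
        (Real.exp ((∑ i, ∑ j, (U i j) ^ 2) / 2) / Real.sqrt ((Uᵀ * U).det)) :=
  Phi_ge_condition_number_general hn U σ hσpos P Q hP hQ hsvd κ hκ
end

section
/- For every κ ≥ 1 and n ≥ 2 there exists a nonsingular U ∈ R^{n×n} with condition number κ and 2e^{-n/2}Φ(U) = κ + 1/κ ≤ 2κ; namely one may take U diagonal with σ₁ = (2κ²/(1+κ²))^{1/2}, σ_n = (2/(1+κ²))^{1/2}, and σᵢ = 1 for 1 < i < n. -/
/-!
Take `U` diagonal with all singular values `1` except `σ₁ = κ σ_n`. The normalisation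
`σ₁² + σ_n² = 2` makes `‖U‖_F² = n`, so the exponential factors cancel and
`2e^{-n/2} Φ(U) = 2 / (σ₁ σ_n) = (1 + κ²) / κ = κ + 1/κ`.
-/

open Matrix

theorem Matrix.det_transpose_mul_self {ι R : Type*} [Fintype ι] [DecidableEq ι] [CommRing R]
    (A : Matrix ι ι R) : (Aᵀ * A).det = A.det ^ 2 := by
  rw [det_mul, det_transpose, sq]

theorem Matrix.sum_sum_diagonal_sq {ι R : Type*} [Fintype ι] [DecidableEq ι] [Semiring R]
    (d : ι → R) : ∑ i, ∑ j, diagonal d i j ^ 2 = ∑ i, d i ^ 2 := by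
  simp [diagonal_apply, ite_pow]

def endpointProfile (n : ℕ) (a b : ℝ) : Fin n → ℝ := fun i =>
  if i.val = 0 then a else if i.val = n - 1 then b else 1

section endpointProfile

variable {n : ℕ}

theorem endpointProfile_first (a b : ℝ) (h : 0 < n) : endpointProfile n a b ⟨0, h⟩ = a :=
  if_pos rfl

theorem endpointProfile_last (hn : 2 ≤ n) (a b : ℝ) (h : n - 1 < n) :
    endpointProfile n a b ⟨n - 1, h⟩ = b := by
  simp only [endpointProfile, if_neg (show n - 1 ≠ 0 by omega), if_true]

theorem endpointProfile_pos {a b : ℝ} (ha : 0 < a) (hb : 0 < b) (i : Fin n) :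
    0 < endpointProfile n a b i := by
  unfold endpointProfile
  split_ifs <;> positivity

theorem antitone_endpointProfile {a b : ℝ} (hb : b ≤ 1) (ha : 1 ≤ a) :
    Antitone (endpointProfile n a b) := by
  intro i j hij
  have hij' : i.val ≤ j.val := hij
  have hj := j.isLt
  unfold endpointProfile
  split_ifs <;> first | linarith | omega

theorem endpointProfile_eq_one (hn : 2 ≤ n) (a b : ℝ) (i : Fin n)
    (hi : i ≠ ⟨0, zero_lt_two.trans_le hn⟩ ∧ i ≠ ⟨n - 1, Nat.sub_one_lt_of_lt hn⟩) :
    endpointProfile n a b i = 1 := by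
  have h0 : i.val ≠ 0 := fun h => hi.1 (Fin.ext h)
  have h1 : i.val ≠ n - 1 := fun h => hi.2 (Fin.ext h)
  simp only [endpointProfile, if_neg h0, if_neg h1]

theorem first_ne_last (hn : 2 ≤ n) :
    (⟨0, zero_lt_two.trans_le hn⟩ : Fin n) ≠ ⟨n - 1, Nat.sub_one_lt_of_lt hn⟩ := by
  simp only [ne_eq, Fin.mk.injEq]
  omega

theorem prod_endpointProfile (hn : 2 ≤ n) (a b : ℝ) :
    ∏ i, endpointProfile n a b i = a * b := by
  rw [Fintype.prod_eq_mul _ _ (first_ne_last hn) (endpointProfile_eq_one hn a b),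
    endpointProfile_first, endpointProfile_last hn]

theorem sum_sq_endpointProfile (hn : 2 ≤ n) (a b : ℝ) :
    ∑ i, endpointProfile n a b i ^ 2 = n + (a ^ 2 - 1) + (b ^ 2 - 1) := by
  have h := Fintype.sum_eq_add (f := fun i => endpointProfile n a b i ^ 2 - 1) _ _
    (first_ne_last hn) fun i hi => by simp [endpointProfile_eq_one hn a b i hi]
  simp only [Finset.sum_sub_distrib, endpointProfile_first, endpointProfile_last hn,
    Finset.sum_const, Finset.card_univ, Fintype.card_fin, nsmul_eq_mul, mul_one] at h
  linarith

end endpointProfile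

theorem two_mul_exp_neg_half_mul_exp_div_sqrt {a b : ℝ} (ha : 0 < a) (hb : 0 < b)
    (hsq : a ^ 2 + b ^ 2 = 2) (x : ℝ) :
    2 * Real.exp (-x / 2) * (Real.exp ((x + (a ^ 2 - 1) + (b ^ 2 - 1)) / 2) / √((a * b) ^ 2)) =
      2 / (a * b) := by
  have hexp : Real.exp (-x / 2) * Real.exp ((x + (a ^ 2 - 1) + (b ^ 2 - 1)) / 2) = 1 := by
    rw [← Real.exp_add, show -x / 2 + (x + (a ^ 2 - 1) + (b ^ 2 - 1)) / 2 = 0 by linarith,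
      Real.exp_zero]
  rw [Real.sqrt_sq (by positivity), mul_div_assoc', mul_assoc, hexp, mul_one]

section tightness

variable {κ : ℝ}

theorem sqrt_two_div_one_add_sq_le_one (hκ : 1 ≤ κ) : √(2 / (1 + κ ^ 2)) ≤ 1 :=
  Real.sqrt_le_one.mpr ((div_le_one (by positivity)).mpr (by nlinarith))

theorem sqrt_two_mul_sq_div_one_add_sq (hκ : 0 ≤ κ) :
    √(2 * κ ^ 2 / (1 + κ ^ 2)) = κ * √(2 / (1 + κ ^ 2)) := by
  rw [mul_comm 2, mul_div_assoc, Real.sqrt_mul (sq_nonneg κ), Real.sqrt_sq hκ]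

theorem one_le_sqrt_two_mul_sq_div_one_add_sq (hκ : 1 ≤ κ) :
    1 ≤ √(2 * κ ^ 2 / (1 + κ ^ 2)) :=
  Real.one_le_sqrt.mpr ((one_le_div (by positivity)).mpr (by nlinarith))

theorem sq_mul_sqrt_two_div_add_sq (κ : ℝ) :
    (κ * √(2 / (1 + κ ^ 2))) ^ 2 + √(2 / (1 + κ ^ 2)) ^ 2 = 2 := by
  rw [mul_pow, Real.sq_sqrt (by positivity)]
  field_simp
  ring

theorem two_div_mul_sqrt_two_div_mul_sqrt (hκ : 0 < κ) :
    2 / (κ * √(2 / (1 + κ ^ 2)) * √(2 / (1 + κ ^ 2))) = κ + 1 / κ := by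
  rw [mul_assoc, Real.mul_self_sqrt (by positivity)]
  field_simp
  ring

end tightness

/-- Theorem 2 (tightness): for every `κ ≥ 1` and `n ≥ 2` there is a nonsingular
diagonal `U ∈ ℝ^{n×n}` with singular values `σ₁ ≥ … ≥ σ_n > 0`, condition number
`σ₁/σ_n = κ`, and `2e^{-n/2}Φ(U) = κ + 1/κ ≤ 2κ`; one may take the diagonal entries
`σ₁ = (2κ²/(1+κ²))^{1/2}`, `σ_n = (2/(1+κ²))^{1/2}`, and `σᵢ = 1` otherwise. -/
theorem Phi_bound_tight {n : ℕ} (hn : 2 ≤ n) (κ : ℝ) (hκ : 1 ≤ κ) :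
    ∃ (σ : Fin n → ℝ) (U : Matrix (Fin n) (Fin n) ℝ),
      (∀ i, 0 < σ i) ∧
      (∀ i j : Fin n, i ≤ j → σ j ≤ σ i) ∧
      U = Matrix.diagonal σ ∧
      IsUnit U.det ∧
      (σ = fun i : Fin n =>
        if i.val = 0 then Real.sqrt (2 * κ ^ 2 / (1 + κ ^ 2))
        else if i.val = n - 1 then Real.sqrt (2 / (1 + κ ^ 2))
        else 1) ∧
      σ ⟨0, by omega⟩ / σ ⟨n - 1, by omega⟩ = κ ∧
      2 * Real.exp (-(n : ℝ) / 2) *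
          (Real.exp ((∑ i, ∑ j, (U i j) ^ 2) / 2) / Real.sqrt ((Uᵀ * U).det)) =
        κ + 1 / κ ∧
      κ + 1 / κ ≤ 2 * κ := by
  have hκ0 : 0 < κ := by linarith
  set b := √(2 / (1 + κ ^ 2))
  set a := √(2 * κ ^ 2 / (1 + κ ^ 2))
  have ha_eq : a = κ * b := sqrt_two_mul_sq_div_one_add_sq hκ0.le
  have hb : 0 < b := Real.sqrt_pos.mpr (by positivity)
  have ha : 0 < a := ha_eq ▸ mul_pos hκ0 hb
  have hσ := endpointProfile_pos (n := n) ha hb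
  refine ⟨endpointProfile n a b, diagonal (endpointProfile n a b), hσ,
    antitone_endpointProfile (sqrt_two_div_one_add_sq_le_one hκ)
      (one_le_sqrt_two_mul_sq_div_one_add_sq hκ), rfl, ?_, rfl, ?_, ?_, ?_⟩
  · rw [det_diagonal]
    exact (Finset.prod_pos fun i _ => hσ i).ne'.isUnit
  · rw [endpointProfile_first, endpointProfile_last hn, ha_eq, mul_div_cancel_right₀ _ hb.ne']
  · rw [sum_sum_diagonal_sq, det_transpose_mul_self, det_diagonal, prod_endpointProfile hn,
      sum_sq_endpointProfile hn, ha_eq,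
      two_mul_exp_neg_half_mul_exp_div_sqrt (mul_pos hκ0 hb) hb (sq_mul_sqrt_two_div_add_sq κ),
      two_div_mul_sqrt_two_div_mul_sqrt hκ0]
  · have : 1 / κ ≤ 1 := (div_le_one hκ0).mpr hκ
    linarith
end
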